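/- For every n ≥ 1, the rational-number identity X̃_n(1,2) = (1/2)·((n−1)(n−6) + 4·∑_{k=1}^{n−1} 1/k)·(n−1)! holds, where ∑_{k=1}^{n−1} 1/k is the (n−1)-st harmonic number. -/

import Mathlib

/-!
Along `h' = 0` and `h' = 1` the recurrence closes up, because `X̃_n(h', p) = 0` for `h' < 0` and
for `p < 0`. On `h' = 0` it gives `X̃_{n+1}(0, p) = (n + 1) X̃_n(0, p)`, so
`X̃_n(0, p) = n! [p = 0]`. On `h' = 1` it gives
`X̃_{n+1}(1, p) = n (X̃_n(0, p) + X̃_n(1, p)) + 2 X̃_n(1, p - 1)`, which determines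
`X̃_n(1, 0)`, `X̃_n(1, 1)`, `X̃_n(1, 2)` in turn. For `p = 2`, `Y_n = X̃_n(1, 2) / (n - 1)!`
satisfies `Y_{n+1} = Y_n + (n - 1)(n - 2) / n = Y_n + n - 3 + 2 / n`, and the `2 / n` produce
the harmonic number.
-/

/-- Refined counting numbers `Xtab n h p`: `Xtab 1 2 0 = 1`, zero off `(2,0)` at `n = 1`, and
`Xtab n h p = (2n+1-h)·(Xtab (n-1) (h-2) p + Xtab (n-1) (h-1) p) + 2(h-1-n)·Xtab (n-1) (h-1) (p-1)`
for `n ≥ 2`.  `Xtab n h p` counts generalized tree-like tableaux of size `n`, half-perimeter `h`,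
with exactly `p` off-diagonal points attached to a diagonal point. -/
def Xtab : ℕ → ℤ → ℤ → ℤ
  | 0, _, _ => 0
  | 1, h, p => if h = 2 ∧ p = 0 then 1 else 0
  | n + 2, h, p =>
      (2 * ((n : ℤ) + 2) + 1 - h) * (Xtab (n + 1) (h - 2) p + Xtab (n + 1) (h - 1) p)
        + 2 * (h - 1 - ((n : ℤ) + 2)) * Xtab (n + 1) (h - 1) (p - 1)

/-- The paper's `X̃_n(h', p) = X_n(n + 1 + h', p)`. -/
def Xtilde (n : ℕ) (h p : ℤ) : ℤ := Xtab n (n + 1 + h) p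

lemma Xtab_eq_zero_of_neg : ∀ (n : ℕ) (h : ℤ) {p : ℤ}, p < 0 → Xtab n h p = 0
  | 0, _, _, _ => rfl
  | 1, _, _, hp => by simp only [Xtab]; grind
  | n + 2, h, p, hp => by
    rw [Xtab, Xtab_eq_zero_of_neg (n + 1) (h - 2) hp, Xtab_eq_zero_of_neg (n + 1) (h - 1) hp,
      Xtab_eq_zero_of_neg (n + 1) (h - 1) (by omega : p - 1 < 0)]
    ring

lemma Xtab_eq_zero_of_le : ∀ (n : ℕ) {h : ℤ} (p : ℤ), h ≤ n → Xtab n h p = 0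
  | 0, _, _, _ => rfl
  | 1, _, _, hh => by simp only [Xtab]; grind
  | n + 2, h, p, hh => by
    push_cast at hh
    rw [Xtab, Xtab_eq_zero_of_le (n + 1) p (by push_cast; omega : h - 2 ≤ _),
      Xtab_eq_zero_of_le (n + 1) p (by push_cast; omega : h - 1 ≤ _),
      Xtab_eq_zero_of_le (n + 1) (p - 1) (by push_cast; omega : h - 1 ≤ _)]
    ring

lemma Xtilde_eq_zero_of_neg_left (n : ℕ) {h : ℤ} (p : ℤ) (hh : h < 0) : Xtilde n h p = 0 :=
  Xtab_eq_zero_of_le n p (by omega)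

lemma Xtilde_eq_zero_of_neg_right (n : ℕ) (h : ℤ) {p : ℤ} (hp : p < 0) : Xtilde n h p = 0 :=
  Xtab_eq_zero_of_neg n _ hp

lemma Xtilde_succ_succ (m : ℕ) (h p : ℤ) :
    Xtilde (m + 2) h p = ((m : ℤ) + 2 - h) * (Xtilde (m + 1) (h - 1) p + Xtilde (m + 1) h p)
      + 2 * h * Xtilde (m + 1) h (p - 1) := by
  simp only [Xtilde, Xtab]
  push_cast
  ring_nf

lemma Xtilde_zero (m : ℕ) (p : ℤ) :
    Xtilde (m + 1) 0 p = if p = 0 then ((m + 1).factorial : ℤ) else 0 := by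
  induction m with
  | zero => simp [Xtilde, Xtab]
  | succ m ih =>
    rw [Xtilde_succ_succ, Xtilde_eq_zero_of_neg_left _ _ (by norm_num), ih,
      Nat.factorial_succ (m + 1)]
    split_ifs <;> push_cast <;> ring

lemma two_mul_Xtilde_one_zero (m : ℕ) :
    2 * Xtilde (m + 1) 1 0 = m * (m + 1).factorial := by
  induction m with
  | zero => simp [Xtilde, Xtab]
  | succ m ih =>
    rw [Xtilde_succ_succ, sub_self, Xtilde_zero, if_pos rfl,
      Xtilde_eq_zero_of_neg_right _ _ (by norm_num : (0 : ℤ) - 1 < 0),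
      Nat.factorial_succ (m + 1)]
    push_cast at ih ⊢
    linear_combination ((m : ℤ) + 1) * ih

lemma two_mul_Xtilde_one_one (m : ℕ) :
    2 * Xtilde (m + 1) 1 1 = m * (m - 1) * m.factorial := by
  induction m with
  | zero => simp [Xtilde, Xtab]
  | succ m ih =>
    rw [Xtilde_succ_succ, sub_self, Xtilde_zero, if_neg one_ne_zero, Nat.factorial_succ m]
    have h₀ := two_mul_Xtilde_one_zero m
    push_cast [Nat.factorial_succ] at ih h₀ ⊢
    linear_combination ((m : ℤ) + 1) * ih + 2 * h₀

lemma Xtilde_one_two (m : ℕ) :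
    (Xtilde (m + 1) 1 2 : ℚ) = (m * (m - 5) + 4 * harmonic m) * m.factorial / 2 := by
  induction m with
  | zero => simp [Xtilde, Xtab]
  | succ m ih =>
    rw [Xtilde_succ_succ, sub_self, Xtilde_zero, if_neg two_ne_zero,
      show (2 : ℤ) - 1 = 1 by norm_num, harmonic_succ, Nat.factorial_succ m]
    have h₁ : (2 * Xtilde (m + 1) 1 1 : ℚ) = m * (m - 1) * m.factorial := by
      exact_mod_cast two_mul_Xtilde_one_one m
    have hm : ((m : ℚ) + 1) * ((m : ℚ) + 1)⁻¹ = 1 := mul_inv_cancel₀ (by positivity)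
    push_cast at ih h₁ ⊢
    linear_combination ((m : ℚ) + 1) * ih + h₁ - 2 * (m.factorial : ℚ) * hm

/-- For every n ≥ 1, X̃_n(1,2) = (1/2)·((n−1)(n−6) + 4·∑_{k=1}^{n−1} 1/k)·(n−1)! in ℚ,
where X̃_n(1,2) := X_n(n+2, 2). -/
theorem stmt18 (n : ℕ) (hn : 1 ≤ n) :
    ((Xtab n ((n : ℤ) + 2) 2 : ℤ) : ℚ)
      = (1 / 2) * (((n : ℚ) - 1) * ((n : ℚ) - 6)
          + 4 * ∑ k ∈ Finset.Icc 1 (n - 1), (1 : ℚ) / (k : ℚ))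
          * (Nat.factorial (n - 1) : ℚ) := by
  obtain ⟨m, rfl⟩ : ∃ m, n = m + 1 := ⟨n - 1, by omega⟩
  have h := Xtilde_one_two m
  simp only [Xtilde, harmonic_eq_sum_Icc] at h
  rw [show ((m + 1 : ℕ) : ℤ) + 2 = (m + 1 : ℕ) + 1 + 1 by ring, h, Nat.add_sub_cancel]
  simp only [one_div]
  push_cast
  ring
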